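/- arXiv:2201.09589 — 4 statements merged into one kernel-verified Lean document; each statement's English description precedes it below -/
import Mathlib

section
/- Let A and B be linear orders and let C be a finite chain in the product partial order A × B. For K ⊆ C write π₁K and π₂K for the images of K under the two coordinate projections. Call K ⊆ C rigid if for every (a,b) ∈ C ∖ K, either a ∉ π₁K or b ∉ π₂K. Then: (i) for every K ⊆ C, the set K^r := { (a,b) ∈ C : a ∈ π₁K and b ∈ π₂K } is rigid, contains K, and satisfies π₁K^r = π₁K and π₂K^r = π₂K; (ii) if K₁, K₂ ⊆ C are both rigid with π₁K₁ = π₁K₂ and π₂K₁ = π₂K₂, then K₁ = K₂. Consequently, each fiber of the map K ↦ (π₁K, π₂K) on subsets of C contains a unique rigid element, which is its greatest element under inclusion. -/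
/-!
Membership of `p ∈ C` in `rigidify C K` depends on `K` only through its two projections,
and `K` is rigid exactly when `rigidify C K ⊆ K`. Since `K ⊆ C` is always contained in
`rigidify C K` with the same projections, both claims follow.
-/

/-- K is rigid in C: for every (a,b) ∈ C ∖ K, either a is not a first
coordinate of K or b is not a second coordinate of K. -/
def Rigid {A B : Type*} [DecidableEq A] [DecidableEq B]
    (C K : Finset (A × B)) : Prop :=
  ∀ p ∈ C, p ∉ K → (p.1 ∉ K.image Prod.fst ∨ p.2 ∉ K.image Prod.snd)

/-- K^r = { (a,b) ∈ C : a ∈ π₁K and b ∈ π₂K }. -/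
def rigidify {A B : Type*} [DecidableEq A] [DecidableEq B]
    (C K : Finset (A × B)) : Finset (A × B) :=
  C.filter fun p => p.1 ∈ K.image Prod.fst ∧ p.2 ∈ K.image Prod.snd

section Rigidify

variable {A B : Type*} [DecidableEq A] [DecidableEq B] {C K K₁ K₂ K' : Finset (A × B)}

@[simp]
theorem mem_rigidify {p : A × B} :
    p ∈ rigidify C K ↔ p ∈ C ∧ p.1 ∈ K.image Prod.fst ∧ p.2 ∈ K.image Prod.snd :=
  Finset.mem_filter

theorem rigid_iff_rigidify_subset : Rigid C K ↔ rigidify C K ⊆ K := by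
  simp only [Rigid, Finset.subset_iff, mem_rigidify]
  grind

theorem rigidify_congr (h₁ : K₁.image Prod.fst = K₂.image Prod.fst)
    (h₂ : K₁.image Prod.snd = K₂.image Prod.snd) : rigidify C K₁ = rigidify C K₂ := by
  simp only [rigidify, h₁, h₂]

theorem subset_rigidify_of_image_subset (hK' : K' ⊆ C)
    (h₁ : K'.image Prod.fst ⊆ K.image Prod.fst) (h₂ : K'.image Prod.snd ⊆ K.image Prod.snd) :
    K' ⊆ rigidify C K := fun _ hp =>
  mem_rigidify.mpr ⟨hK' hp, h₁ (Finset.mem_image_of_mem _ hp), h₂ (Finset.mem_image_of_mem _ hp)⟩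

theorem subset_rigidify (hK : K ⊆ C) : K ⊆ rigidify C K :=
  subset_rigidify_of_image_subset hK subset_rfl subset_rfl

theorem image_fst_rigidify (hK : K ⊆ C) : (rigidify C K).image Prod.fst = K.image Prod.fst :=
  (Finset.image_subset_iff.mpr fun _ hp => (mem_rigidify.mp hp).2.1).antisymm
    (Finset.image_subset_image (subset_rigidify hK))

theorem image_snd_rigidify (hK : K ⊆ C) : (rigidify C K).image Prod.snd = K.image Prod.snd :=
  (Finset.image_subset_iff.mpr fun _ hp => (mem_rigidify.mp hp).2.2).antisymm
    (Finset.image_subset_image (subset_rigidify hK))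

theorem rigid_rigidify (hK : K ⊆ C) : Rigid C (rigidify C K) :=
  rigid_iff_rigidify_subset.mpr (rigidify_congr (image_fst_rigidify hK) (image_snd_rigidify hK)).le

theorem Rigid.rigidify_eq (h : Rigid C K) (hK : K ⊆ C) : rigidify C K = K :=
  (rigid_iff_rigidify_subset.mp h).antisymm (subset_rigidify hK)

end Rigidify

theorem stmt_6_general {A B : Type*} [LinearOrder A] [LinearOrder B]
    (C : Finset (A × B)) :
    (∀ K ⊆ C,
      Rigid C (rigidify C K) ∧ K ⊆ rigidify C K ∧
      (rigidify C K).image Prod.fst = K.image Prod.fst ∧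
      (rigidify C K).image Prod.snd = K.image Prod.snd) ∧
    (∀ K₁ K₂, K₁ ⊆ C → K₂ ⊆ C → Rigid C K₁ → Rigid C K₂ →
      K₁.image Prod.fst = K₂.image Prod.fst →
      K₁.image Prod.snd = K₂.image Prod.snd → K₁ = K₂) ∧
    (∀ K K', K ⊆ C → K' ⊆ C →
      K'.image Prod.fst = K.image Prod.fst →
      K'.image Prod.snd = K.image Prod.snd → K' ⊆ rigidify C K) := by
  refine ⟨fun K hK => ⟨rigid_rigidify hK, subset_rigidify hK, image_fst_rigidify hK,
      image_snd_rigidify hK⟩, ?_, ?_⟩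
  · intro K₁ K₂ hK₁ hK₂ hr₁ hr₂ h₁ h₂
    rw [← hr₁.rigidify_eq hK₁, ← hr₂.rigidify_eq hK₂, rigidify_congr h₁ h₂]
  · intro K K' _ hK' h₁ h₂
    exact subset_rigidify_of_image_subset hK' h₁.le h₂.le

/-- for a finite chain C in the product order on A × B,
(i) K^r is rigid, contains K and has the same coordinate projections;
(ii) rigid subsets with equal projections are equal; consequently each fiber
of K ↦ (π₁K, π₂K) contains a unique rigid element, its greatest element. -/
theorem stmt_6 {A B : Type*} [LinearOrder A] [LinearOrder B]
    (C : Finset (A × B)) (hC : IsChain (· ≤ ·) (C : Set (A × B))) :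
    (∀ K ⊆ C,
      Rigid C (rigidify C K) ∧ K ⊆ rigidify C K ∧
      (rigidify C K).image Prod.fst = K.image Prod.fst ∧
      (rigidify C K).image Prod.snd = K.image Prod.snd) ∧
    (∀ K₁ K₂, K₁ ⊆ C → K₂ ⊆ C → Rigid C K₁ → Rigid C K₂ →
      K₁.image Prod.fst = K₂.image Prod.fst →
      K₁.image Prod.snd = K₂.image Prod.snd → K₁ = K₂) ∧
    (∀ K K', K ⊆ C → K' ⊆ C →
      K'.image Prod.fst = K.image Prod.fst →
      K'.image Prod.snd = K.image Prod.snd → K' ⊆ rigidify C K) :=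
  stmt_6_general C
end

section
/- Fix n ≥ 0 and nonempty subsets S ⊆ T ⊆ {0,…,n} with min S = min T. Let 𝔏 denote the poset (ordered by inclusion of chains) of finite chains 𝒞 of subsets, totally ordered by inclusion, with S, T ∈ 𝒞 and S ⊆ V ⊆ T for every V ∈ 𝒞; let 𝔅 ⊆ 𝔏 consist of those chains all of whose members other than S and T are of the form [T,s] := { r ∈ T : r ≤ s } for some s ∈ T. Let 𝒪 denote the poset of subsets U ⊆ T with min U = max S and max U = max T, ordered by inclusion. Define ξ : 𝔏 → 𝒪 by ξ(𝒞) = { max V : V ∈ 𝒞 }, and γ : 𝒪 → 𝔅 by sending U = { max S = u₀ < u₁ < ⋯ < u_m = max T } to the chain {S} ∪ { [T, u_ℓ] : 1 ≤ ℓ ≤ m−1 } ∪ {T}. Then ξ and γ are well defined and monotone, ξ(γ(U)) = U for every U ∈ 𝒪, and for every 𝒞 ∈ 𝔅 one has γ(ξ(𝒞)) ⊆ 𝒞 with 𝒞 ∖ γ(ξ(𝒞)) ⊆ { [T, max S] }. In particular γ∘ξ ≤ id on 𝔅, so ξ restricted to 𝔅 and γ form an order-theoretic homotopy equivalence between 𝔅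 and 𝒪. -/
/-!
Both maps are images of very simple operations: ξ takes maxima and γ takes initial segments
`[T, u]` of `T`. Since `max [T, u] = u` for `u ∈ T`, ξ undoes γ. Conversely every member `V` of a
chain in 𝔅 other than `S` and `T` is an initial segment `[T, max V]`, so γ(ξ(𝒞)) recovers all of
these except when `max V` coincides with `max S` or `max T`: the first is excluded by γ, and the
second would force `V = T`.
-/

/-- C is a chain (under inclusion) of subsets between S and T containing both
endpoints: an object of the poset 𝔏. -/
def memLc (S T : Finset ℕ) (C : Finset (Finset ℕ)) : Prop :=
  S ∈ C ∧ T ∈ C ∧ (∀ V ∈ C, S ⊆ V ∧ V ⊆ T) ∧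
    ∀ V ∈ C, ∀ W ∈ C, V ⊆ W ∨ W ⊆ V

/-- C belongs to 𝔅: all members other than S and T are of the form
[T,s] = { r ∈ T : r ≤ s } for some s ∈ T. -/
def memBc (S T : Finset ℕ) (C : Finset (Finset ℕ)) : Prop :=
  memLc S T C ∧ ∀ V ∈ C, V ≠ S → V ≠ T → ∃ s ∈ T, V = T.filter (· ≤ s)

/-- U belongs to the poset 𝒪: U ⊆ T with min U = max S and max U = max T. -/
def memO (S T U : Finset ℕ) : Prop :=
  U ⊆ T ∧ S.sup id ∈ U ∧ (∀ x ∈ U, S.sup id ≤ x) ∧ T.sup id ∈ U ∧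
    ∀ x ∈ U, x ≤ T.sup id

/-- ξ(𝒞) = { max V : V ∈ 𝒞 }. -/
def xiMap (C : Finset (Finset ℕ)) : Finset ℕ := C.image fun V => V.sup id

/-- γ(U) = {S} ∪ { [T,u] : u ∈ U, u ≠ max S, u ≠ max T } ∪ {T}. -/
def gammaMap (S T U : Finset ℕ) : Finset (Finset ℕ) :=
  insert S (insert T
    ((U.filter fun u => u ≠ S.sup id ∧ u ≠ T.sup id).image
      fun u => T.filter (· ≤ u)))

namespace Finset

variable {α : Type*} [LinearOrder α]

theorem sup_id_mem [OrderBot α] {s : Finset α} (hs : s.Nonempty) : s.sup id ∈ s := by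
  obtain ⟨x, hx, hsup⟩ := s.exists_mem_eq_sup hs id
  exact hsup ▸ hx

theorem sup_id_filter_le [OrderBot α] {s : Finset α} {u : α} (hu : u ∈ s) :
    (s.filter (· ≤ u)).sup id = u :=
  le_antisymm (Finset.sup_le fun _ hx => (mem_filter.mp hx).2) (le_sup (f := id) (by simpa))

theorem filter_le_sup_id [OrderBot α] (s : Finset α) : s.filter (· ≤ s.sup id) = s :=
  filter_true_of_mem fun _ hx => le_sup (f := id) hx

theorem filter_le_subset_filter_le (s : Finset α) {u v : α} (h : u ≤ v) :
    s.filter (· ≤ u) ⊆ s.filter (· ≤ v) :=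
  monotone_filter_right s fun _ _ hx => hx.trans h

theorem subset_filter_le_of_sup_id_le [OrderBot α] {s t : Finset α} {u : α} (hst : s ⊆ t)
    (hu : s.sup id ≤ u) : s ⊆ t.filter (· ≤ u) :=
  fun _ hx => mem_filter.mpr ⟨hst hx, (le_sup (f := id) hx).trans hu⟩

end Finset

open Finset

variable {S T U : Finset ℕ} {C : Finset (Finset ℕ)}

theorem memO_xiMap (hS : S.Nonempty) (hC : memLc S T C) : memO S T (xiMap C) := by
  obtain ⟨hSC, hTC, hbetween, -⟩ := hC
  refine ⟨?_, mem_image_of_mem _ hSC, ?_, mem_image_of_mem _ hTC, ?_⟩ <;>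
    simp only [xiMap, image_subset_iff, forall_mem_image]
  · exact fun V hV => (hbetween V hV).2 (sup_id_mem (hS.mono (hbetween V hV).1))
  · exact fun V hV => sup_mono (hbetween V hV).1
  · exact fun V hV => sup_mono (hbetween V hV).2

theorem xiMap_mono : Monotone xiMap :=
  fun _ _ h => image_subset_image h

theorem mem_gammaMap {V : Finset ℕ} :
    V ∈ gammaMap S T U ↔ V = S ∨ V = T ∨
      ∃ u ∈ U, u ≠ S.sup id ∧ u ≠ T.sup id ∧ T.filter (· ≤ u) = V := by
  simp only [gammaMap, mem_insert, mem_image, mem_filter, and_assoc]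

theorem gammaMap_mono {U' : Finset ℕ} (h : U ⊆ U') : gammaMap S T U ⊆ gammaMap S T U' :=
  insert_subset_insert _ <| insert_subset_insert _ <|
    image_subset_image <| filter_subset_filter _ h

theorem between_of_mem_gammaMap (hST : S ⊆ T) (hU : ∀ u ∈ U, S.sup id ≤ u) {V : Finset ℕ}
    (hV : V ∈ gammaMap S T U) : S ⊆ V ∧ V ⊆ T := by
  rcases mem_gammaMap.mp hV with rfl | rfl | ⟨u, hu, -, -, rfl⟩
  · exact ⟨subset_rfl, hST⟩
  · exact ⟨hST, subset_rfl⟩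
  · exact ⟨subset_filter_le_of_sup_id_le hST (hU u hu), filter_subset _ _⟩

theorem memLc_gammaMap (hST : S ⊆ T) (hU : ∀ u ∈ U, S.sup id ≤ u) :
    memLc S T (gammaMap S T U) := by
  have hbetween := fun V => between_of_mem_gammaMap (V := V) hST hU
  refine ⟨mem_gammaMap.mpr (.inl rfl), mem_gammaMap.mpr (.inr (.inl rfl)), hbetween, ?_⟩
  intro V hV W hW
  rcases mem_gammaMap.mp hV with rfl | rfl | ⟨u, -, -, -, rfl⟩
  · exact .inl (hbetween W hW).1
  · exact .inr (hbetween W hW).2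
  rcases mem_gammaMap.mp hW with rfl | rfl | ⟨v, -, -, -, rfl⟩
  · exact .inr (hbetween _ hV).1
  · exact .inl (hbetween _ hV).2
  · exact (le_total u v).imp (filter_le_subset_filter_le T) (filter_le_subset_filter_le T)

theorem memBc_gammaMap (hST : S ⊆ T) (hU : memO S T U) : memBc S T (gammaMap S T U) := by
  refine ⟨memLc_gammaMap hST hU.2.2.1, fun V hV hVS hVT => ?_⟩
  rcases mem_gammaMap.mp hV with rfl | rfl | ⟨u, hu, -, -, rfl⟩
  · exact absurd rfl hVS
  · exact absurd rfl hVT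
  · exact ⟨u, hU.1 hu, rfl⟩

theorem xiMap_gammaMap (hU : memO S T U) : xiMap (gammaMap S T U) = U := by
  obtain ⟨hUT, hSU, -, hTU, -⟩ := hU
  apply Subset.antisymm
  · simp only [xiMap, image_subset_iff]
    intro V hV
    rcases mem_gammaMap.mp hV with rfl | rfl | ⟨u, hu, -, -, rfl⟩
    · exact hSU
    · exact hTU
    · rwa [sup_id_filter_le (hUT hu)]
  · intro u hu
    by_cases huS : u = S.sup id
    · exact huS ▸ mem_image_of_mem _ (mem_gammaMap.mpr (.inl rfl))
    by_cases huT : u = T.sup id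
    · exact huT ▸ mem_image_of_mem _ (mem_gammaMap.mpr (.inr (.inl rfl)))
    have hmem : T.filter (· ≤ u) ∈ gammaMap S T U :=
      mem_gammaMap.mpr (.inr (.inr ⟨u, hu, huS, huT, rfl⟩))
    simpa only [xiMap, sup_id_filter_le (hUT hu)] using mem_image_of_mem (fun V => V.sup id) hmem

theorem filter_le_sup_id_eq_of_memBc (hC : memBc S T C) {V : Finset ℕ} (hV : V ∈ C)
    (hVS : V ≠ S) (hVT : V ≠ T) : T.filter (· ≤ V.sup id) = V := by
  obtain ⟨s, hs, rfl⟩ := hC.2 V hV hVS hVT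
  rw [sup_id_filter_le hs]

theorem gammaMap_xiMap_subset (hC : memBc S T C) : gammaMap S T (xiMap C) ⊆ C := by
  intro V hV
  rcases mem_gammaMap.mp hV with rfl | rfl | ⟨u, hu, huS, huT, rfl⟩
  · exact hC.1.1
  · exact hC.1.2.1
  obtain ⟨W, hW, rfl⟩ := mem_image.mp hu
  have hWS : W ≠ S := by rintro rfl; exact huS rfl
  have hWT : W ≠ T := by rintro rfl; exact huT rfl
  rwa [filter_le_sup_id_eq_of_memBc hC hW hWS hWT]

theorem sdiff_gammaMap_xiMap_subset (hC : memBc S T C) :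
    C \ gammaMap S T (xiMap C) ⊆ {T.filter (· ≤ S.sup id)} := by
  intro V hV
  obtain ⟨hVC, hVγ⟩ := mem_sdiff.mp hV
  have hVS : V ≠ S := fun h => hVγ (mem_gammaMap.mpr (.inl h))
  have hVT : V ≠ T := fun h => hVγ (mem_gammaMap.mpr (.inr (.inl h)))
  have hsegment := filter_le_sup_id_eq_of_memBc hC hVC hVS hVT
  have hsupT : V.sup id ≠ T.sup id := by
    intro h
    exact hVT (by rw [← hsegment, h, filter_le_sup_id])
  have hsupS : V.sup id = S.sup id := by
    by_contra hne
    exact hVγ (mem_gammaMap.mpr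
      (.inr (.inr ⟨V.sup id, mem_image_of_mem _ hVC, hne, hsupT, hsegment⟩)))
  rw [mem_singleton, ← hsegment, hsupS]

theorem stmt_11_general (S T : Finset ℕ) (hS : S.Nonempty) (hST : S ⊆ T) :
    (∀ C, memLc S T C → memO S T (xiMap C)) ∧
    (∀ C C' : Finset (Finset ℕ), C ⊆ C' → xiMap C ⊆ xiMap C') ∧
    (∀ U, memO S T U → memBc S T (gammaMap S T U)) ∧
    (∀ U U', memO S T U → memO S T U' → U ⊆ U' →
      gammaMap S T U ⊆ gammaMap S T U') ∧
    (∀ U, memO S T U → xiMap (gammaMap S T U) = U) ∧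
    (∀ C, memBc S T C →
      gammaMap S T (xiMap C) ⊆ C ∧
      C \ gammaMap S T (xiMap C) ⊆ {T.filter (· ≤ S.sup id)}) :=
  ⟨fun _ => memO_xiMap hS, fun _ _ => (xiMap_mono ·), fun _ => memBc_gammaMap hST,
    fun _ _ _ _ => gammaMap_mono, fun _ => xiMap_gammaMap,
    fun _ hC => ⟨gammaMap_xiMap_subset hC, sdiff_gammaMap_xiMap_subset hC⟩⟩

/-- ξ and γ are well-defined monotone maps, ξ ∘ γ = id on 𝒪,
and γ(ξ(𝒞)) ⊆ 𝒞 with 𝒞 ∖ γ(ξ(𝒞)) ⊆ {[T, max S]} for 𝒞 ∈ 𝔅; hence ξ|𝔅 and γ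
form an order-theoretic homotopy equivalence between 𝔅 and 𝒪. -/
theorem stmt_11 (n : ℕ) (S T : Finset ℕ) (hS : S.Nonempty) (hST : S ⊆ T)
    (hTn : T ⊆ Finset.range (n + 1)) (hmin : ∀ x ∈ T, S.min' hS ≤ x) :
    (∀ C, memLc S T C → memO S T (xiMap C)) ∧
    (∀ C C' : Finset (Finset ℕ), C ⊆ C' → xiMap C ⊆ xiMap C') ∧
    (∀ U, memO S T U → memBc S T (gammaMap S T U)) ∧
    (∀ U U', memO S T U → memO S T U' → U ⊆ U' →
      gammaMap S T U ⊆ gammaMap S T U') ∧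
    (∀ U, memO S T U → xiMap (gammaMap S T U) = U) ∧
    (∀ C, memBc S T C →
      gammaMap S T (xiMap C) ⊆ C ∧
      C \ gammaMap S T (xiMap C) ⊆ {T.filter (· ≤ S.sup id)}) :=
  stmt_11_general S T hS hST
end

section
/- Let σ : [k] → [n] be a monotone map with σ(k) = n, let κ be the least element of [k] with σ(κ) = n, and assume κ ≥ 1; set ℓ := n − σ(κ−1). Define Z_σ ⊆ [k] × [n] (with the product order) to consist of the pairs (x, σ(x)) for 0 ≤ x < κ together with all pairs (x, y) with κ ≤ x ≤ k and σ(0) ≤ y ≤ n. Then: (i) (0, σ(0)) is the least element of Z_σ and (k, n) is the greatest; (ii) the map ρ_σ : [k+ℓ] → Z_σ defined by ρ_σ(j) = (j, σ(j)) for 0 ≤ j ≤ κ−1, ρ_σ(j) = (κ, σ(κ−1) + (j − κ)) for κ ≤ j ≤ κ+ℓ, and ρ_σ(j) = (j − ℓ, n) for κ+ℓ+1 ≤ j ≤ k+ℓ, is a strictly increasing saturated chain in Z_σ from (0, σ(0)) to (k, n), i.e. each pair ρ_σ(j) < ρ_σ(j+1) is a covering relation in Z_σ. -/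
/-!
The chain ρ_σ runs along the graph of σ up to column κ - 1, climbs column κ from σ(κ - 1) to
n = σ(κ - 1) + ℓ, and then runs along row n to (k, n). Every step off the graph moves one
coordinate by one, so it is already a cover in ℕ × ℕ; a step (j, σ j) → (j + 1, σ (j + 1)) along
the graph is a cover in Z_σ because Z_σ meets each column j < κ in the single point (j, σ j).
-/

/-- The poset Z_σ ⊆ [k] × [n]: the graph of σ below κ, together with the full
rectangle [κ,k] × [σ(0),n]. -/
def Zset (k n κ : ℕ) (σ : ℕ → ℕ) : Set (ℕ × ℕ) :=
  {p | (p.1 < κ ∧ p.2 = σ p.1) ∨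
       (κ ≤ p.1 ∧ p.1 ≤ k ∧ σ 0 ≤ p.2 ∧ p.2 ≤ n)}

/-- The distinguished chain ρ_σ : [k+ℓ] → Z_σ defining the simplex 𝖡(σ). -/
def rho (κ ℓ n : ℕ) (σ : ℕ → ℕ) (j : ℕ) : ℕ × ℕ :=
  if j < κ then (j, σ j)
  else if j ≤ κ + ℓ then (κ, σ (κ - 1) + (j - κ))
  else (j - ℓ, n)

open Set

section
variable {k n κ ℓ : ℕ} {σ : ℕ → ℕ}

lemma mk_mem_Zset {a b : ℕ} :
    (a, b) ∈ Zset k n κ σ ↔ a < κ ∧ b = σ a ∨ κ ≤ a ∧ a ≤ k ∧ σ 0 ≤ b ∧ b ≤ n :=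
  Iff.rfl

lemma rho_zero : rho κ ℓ n σ 0 = (0, σ 0) := by
  unfold rho
  split_ifs <;> simp_all

lemma rho_last (hκk : κ ≤ k) (hℓ : σ (κ - 1) + ℓ = n) : rho κ ℓ n σ (k + ℓ) = (k, n) := by
  unfold rho
  split_ifs <;> ext <;> simp only <;> omega

lemma rho_mem_Zset (hσ : MonotoneOn σ (Iic κ)) (hκk : κ ≤ k) (hℓ : σ (κ - 1) + ℓ = n) {j : ℕ}
    (hj : j ≤ k + ℓ) : rho κ ℓ n σ j ∈ Zset k n κ σ := by
  have h0 : σ 0 ≤ σ (κ - 1) := hσ (Nat.zero_le _) (Nat.sub_le κ 1) (Nat.zero_le _)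
  unfold rho
  split_ifs <;> simp only [mk_mem_Zset, and_true] <;> omega

lemma isLeast_Zset (hσ : MonotoneOn σ (Iic κ)) (hκk : κ ≤ k) (hℓ : σ (κ - 1) + ℓ = n) :
    IsLeast (Zset k n κ σ) (0, σ 0) := by
  refine ⟨rho_zero (ℓ := ℓ) ▸ rho_mem_Zset hσ hκk hℓ (Nat.zero_le _), ?_⟩
  rintro ⟨a, b⟩ hw
  rcases mk_mem_Zset.1 hw with ⟨ha, rfl⟩ | ⟨-, -, hb, -⟩
  · exact ⟨Nat.zero_le a, hσ (Nat.zero_le _) ha.le (Nat.zero_le a)⟩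
  · exact ⟨Nat.zero_le a, hb⟩

lemma isGreatest_Zset (hσ : MonotoneOn σ (Iic κ)) (hκk : κ ≤ k) (hℓ : σ (κ - 1) + ℓ = n) :
    IsGreatest (Zset k n κ σ) (k, n) := by
  refine ⟨rho_last hκk hℓ ▸ rho_mem_Zset hσ hκk hℓ le_rfl, ?_⟩
  rintro ⟨a, b⟩ hw
  rcases mk_mem_Zset.1 hw with ⟨ha, rfl⟩ | ⟨-, ha, -, hb⟩
  · have : σ a ≤ σ (κ - 1) := hσ ha.le (Nat.sub_le κ 1) (by omega)
    exact Prod.mk_le_mk.2 ⟨by omega, by omega⟩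
  · exact ⟨ha, hb⟩

lemma rho_succ_cases (hℓ : σ (κ - 1) + ℓ = n) (j : ℕ) :
    rho κ ℓ n σ j ⋖ rho κ ℓ n σ (j + 1) ∨
      j + 1 < κ ∧ rho κ ℓ n σ j = (j, σ j) ∧ rho κ ℓ n σ (j + 1) = (j + 1, σ (j + 1)) := by
  by_cases hj : j + 1 < κ
  · exact .inr ⟨hj, if_pos (by omega), if_pos hj⟩
  left
  rcases eq_or_ne (j + 1) κ with rfl | hjκ
  · simp [rho, Prod.covBy_iff]
  · unfold rho
    split_ifs <;> simp only [Prod.covBy_iff, Nat.covBy_iff_add_one_eq, and_true] <;> omega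

lemma not_lt_lt_of_graph_step {j : ℕ} (hj : j + 1 < κ) {w : ℕ × ℕ} (hw : w ∈ Zset k n κ σ) :
    ¬((j, σ j) < w ∧ w < (j + 1, σ (j + 1))) := by
  obtain ⟨a, b⟩ := w
  rintro ⟨hlo, hhi⟩
  have hja : j ≤ a := hlo.le.1
  have haj : a ≤ j + 1 := hhi.le.1
  rcases mk_mem_Zset.1 hw with ⟨-, rfl⟩ | ⟨ha, -⟩
  · obtain rfl | rfl : a = j ∨ a = j + 1 := by omega
    · exact hlo.ne rfl
    · exact hhi.ne rfl
  · omega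

lemma rho_lt_rho_succ (hσ : MonotoneOn σ (Iic κ)) (hℓ : σ (κ - 1) + ℓ = n) (j : ℕ) :
    rho κ ℓ n σ j < rho κ ℓ n σ (j + 1) := by
  rcases rho_succ_cases hℓ j with hcov | ⟨hj, hρj, hρj'⟩
  · exact hcov.lt
  · rw [hρj, hρj']
    exact Prod.mk_lt_mk.2
      (.inl ⟨j.lt_succ_self, hσ (mem_Iic.2 (by omega)) (mem_Iic.2 hj.le) j.le_succ⟩)

lemma not_lt_lt_rho_succ (hℓ : σ (κ - 1) + ℓ = n) (j : ℕ) {w : ℕ × ℕ}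
    (hw : w ∈ Zset k n κ σ) : ¬(rho κ ℓ n σ j < w ∧ w < rho κ ℓ n σ (j + 1)) := by
  rcases rho_succ_cases hℓ j with hcov | ⟨hj, hρj, hρj'⟩
  · exact fun h => hcov.2 h.1 h.2
  · rw [hρj, hρj']
    exact not_lt_lt_of_graph_step hj hw

end

theorem stmt_12_general (k n κ : ℕ) (σ : ℕ → ℕ)
    (hmono : ∀ a b : ℕ, a ≤ b → b ≤ k → σ a ≤ σ b)
    (hκk : κ ≤ k) (hκ : σ κ = n) :
    IsLeast (Zset k n κ σ) (0, σ 0) ∧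
    IsGreatest (Zset k n κ σ) (k, n) ∧
    (∀ j, j ≤ k + (n - σ (κ - 1)) →
      rho κ (n - σ (κ - 1)) n σ j ∈ Zset k n κ σ) ∧
    rho κ (n - σ (κ - 1)) n σ 0 = (0, σ 0) ∧
    rho κ (n - σ (κ - 1)) n σ (k + (n - σ (κ - 1))) = (k, n) ∧
    (∀ j, j < k + (n - σ (κ - 1)) →
      rho κ (n - σ (κ - 1)) n σ j < rho κ (n - σ (κ - 1)) n σ (j + 1)) ∧
    (∀ j, j < k + (n - σ (κ - 1)) → ∀ w ∈ Zset k n κ σ,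
      ¬(rho κ (n - σ (κ - 1)) n σ j < w ∧
        w < rho κ (n - σ (κ - 1)) n σ (j + 1))) := by
  have hσ : MonotoneOn σ (Iic κ) := fun a _ b hb hab => hmono a b hab ((mem_Iic.1 hb).trans hκk)
  have hℓ : σ (κ - 1) + (n - σ (κ - 1)) = n :=
    Nat.add_sub_cancel' (hκ ▸ hσ (Nat.sub_le κ 1) (mem_Iic.2 le_rfl) (Nat.sub_le κ 1))
  exact ⟨isLeast_Zset hσ hκk hℓ, isGreatest_Zset hσ hκk hℓ, fun _ => rho_mem_Zset hσ hκk hℓ,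
    rho_zero, rho_last hκk hℓ, fun j _ => rho_lt_rho_succ hσ hℓ j,
    fun j _ _ => not_lt_lt_rho_succ hℓ j⟩

/-- (0,σ(0)) is least and (k,n) greatest in Z_σ, and ρ_σ is a
strictly increasing saturated chain in Z_σ from (0,σ(0)) to (k,n) (each step
is a covering relation in Z_σ). Here ℓ = n − σ(κ−1). -/
theorem stmt_12 (k n κ : ℕ) (σ : ℕ → ℕ)
    (hmono : ∀ a b : ℕ, a ≤ b → b ≤ k → σ a ≤ σ b)
    (hσk : σ k = n) (hκk : κ ≤ k) (hκ : σ κ = n)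
    (hleast : ∀ x, x < κ → σ x ≠ n) (hκ1 : 1 ≤ κ) :
    IsLeast (Zset k n κ σ) (0, σ 0) ∧
    IsGreatest (Zset k n κ σ) (k, n) ∧
    (∀ j, j ≤ k + (n - σ (κ - 1)) →
      rho κ (n - σ (κ - 1)) n σ j ∈ Zset k n κ σ) ∧
    rho κ (n - σ (κ - 1)) n σ 0 = (0, σ 0) ∧
    rho κ (n - σ (κ - 1)) n σ (k + (n - σ (κ - 1))) = (k, n) ∧
    (∀ j, j < k + (n - σ (κ - 1)) →
      rho κ (n - σ (κ - 1)) n σ j < rho κ (n - σ (κ - 1)) n σ (j + 1)) ∧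
    (∀ j, j < k + (n - σ (κ - 1)) → ∀ w ∈ Zset k n κ σ,
      ¬(rho κ (n - σ (κ - 1)) n σ j < w ∧
        w < rho κ (n - σ (κ - 1)) n σ (j + 1))) :=
  stmt_12_general k n κ σ hmono hκk hκ
end

section
/- Fix n ≥ 0. Let 𝒪↑ be the category whose objects are nonempty subsets S ⊆ {0,…,n} with 0 ∈ S (equivalently min S = 0), whose morphisms S → T are subsets U ⊆ {0,…,n} with min U = max S, max U = max T and S ∪ U ⊆ T, with composition given by union and identity on S given by {max S}; and let 𝒪 be the category with objects {0,…,n}, morphisms i → j the subsets U with min U = i and max U = j, composition by union, and identity {i}. Let π : 𝒪↑ → 𝒪 be the functor with π(S) = max S and π(U : S → T) = U, and let s : 𝒪 → 𝒪↑ be the functor with s(j) = {0,1,…,j} and s(U : i → j) = U. Then: (i) π and s are well-defined functors with π ∘ s = id_𝒪; (ii) for any category C, a functor H : 𝒪↑ → C factors as H = H' ∘ π for some functor H' : 𝒪 → C if and only if H sends every morphism U : S → T with max S = max T to an identity morphism of C; and in that case H' = H ∘ s is the unique such factorization. -/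
open CategoryTheory

/-- Objects of 𝒪↑: nonempty subsets S ⊆ {0,…,n} with 0 ∈ S (so min S = 0). -/
structure UpObj (n : ℕ) where
  S : Finset ℕ
  mem0 : 0 ∈ S
  sub : S ⊆ Finset.range (n + 1)

namespace UpObj

variable {n : ℕ}

theorem nonempty (A : UpObj n) : A.S.Nonempty := ⟨0, A.mem0⟩

/-- max S. -/
def top (A : UpObj n) : ℕ := A.S.max' A.nonempty

theorem top_mem (A : UpObj n) : A.top ∈ A.S := A.S.max'_mem A.nonempty

theorem top_le (A : UpObj n) : A.top ≤ n := by
  have h := A.sub A.top_mem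
  simp only [Finset.mem_range] at h
  omega

/-- Morphisms S → T of 𝒪↑: subsets U with min U = max S, max U = max T and
S ∪ U ⊆ T. -/
def Hom' (A B : UpObj n) : Type :=
  {U : Finset ℕ // A.top ∈ U ∧ (∀ x ∈ U, A.top ≤ x) ∧ B.top ∈ U ∧
    (∀ x ∈ U, x ≤ B.top) ∧ A.S ∪ U ⊆ B.S}

theorem Hom'.subS {A B : UpObj n} (f : Hom' A B) : A.S ⊆ B.S :=
  fun _ hx => f.2.2.2.2.2 (Finset.mem_union_left _ hx)

theorem Hom'.top_le_top {A B : UpObj n} (f : Hom' A B) : A.top ≤ B.top :=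
  f.2.2.2.2.1 _ f.2.1

instance : Category (UpObj n) where
  Hom := Hom'
  id A := ⟨{A.top}, by simp, by simp, by simp, by simp, by
    intro x hx
    rcases Finset.mem_union.mp hx with h | h
    · exact h
    · rw [Finset.mem_singleton.mp h]; exact A.top_mem⟩
  comp {A B C} f g :=
    ⟨f.1 ∪ g.1, Finset.mem_union_left _ f.2.1,
      (by
        intro x hx
        rcases Finset.mem_union.mp hx with h | h
        · exact f.2.2.1 x h
        · exact le_trans f.top_le_top (g.2.2.1 x h)),
      Finset.mem_union_right _ g.2.2.2.1,
      (by
        intro x hx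
        rcases Finset.mem_union.mp hx with h | h
        · exact le_trans (f.2.2.2.2.1 x h) g.top_le_top
        · exact g.2.2.2.2.1 x h),
      (by
        intro x hx
        rcases Finset.mem_union.mp hx with h | h
        · exact g.subS (f.2.2.2.2.2 (Finset.mem_union_left _ h))
        · rcases Finset.mem_union.mp h with h' | h'
          · exact g.subS (f.2.2.2.2.2 (Finset.mem_union_right _ h'))
          · exact g.2.2.2.2.2 (Finset.mem_union_right _ h'))⟩
  id_comp f := by
    apply Subtype.ext
    show ({_} : Finset ℕ) ∪ f.1 = f.1
    exact Finset.union_eq_right.mpr (Finset.singleton_subset_iff.mpr f.2.1)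
  comp_id f := by
    apply Subtype.ext
    show f.1 ∪ ({_} : Finset ℕ) = f.1
    exact Finset.union_eq_left.mpr (Finset.singleton_subset_iff.mpr f.2.2.2.1)
  assoc f g h := Subtype.ext (Finset.union_assoc _ _ _)

end UpObj

/-- Objects of 𝒪: elements of {0,…,n}. -/
structure DObj (n : ℕ) where
  val : Fin (n + 1)

namespace DObj

variable {n : ℕ}

/-- Morphisms i → j of 𝒪: subsets U with min U = i and max U = j. -/
def DHom (i j : DObj n) : Type :=
  {U : Finset ℕ // (i.val : ℕ) ∈ U ∧ (∀ x ∈ U, (i.val : ℕ) ≤ x) ∧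
    (j.val : ℕ) ∈ U ∧ ∀ x ∈ U, x ≤ (j.val : ℕ)}

theorem DHom.le {i j : DObj n} (f : DHom i j) : (i.val : ℕ) ≤ (j.val : ℕ) :=
  f.2.2.2.2 _ f.2.1

instance : Category (DObj n) where
  Hom := DHom
  id i := ⟨{(i.val : ℕ)}, by simp, by simp, by simp, by simp⟩
  comp {i j k} f g :=
    ⟨f.1 ∪ g.1, Finset.mem_union_left _ f.2.1,
      (by
        intro x hx
        rcases Finset.mem_union.mp hx with h | h
        · exact f.2.2.1 x h
        · exact le_trans (DHom.le f) (g.2.2.1 x h)),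
      Finset.mem_union_right _ g.2.2.2.1,
      (by
        intro x hx
        rcases Finset.mem_union.mp hx with h | h
        · exact le_trans (f.2.2.2.2 x h) (DHom.le g)
        · exact g.2.2.2.2 x h)⟩
  id_comp f := by
    apply Subtype.ext
    show ({_} : Finset ℕ) ∪ f.1 = f.1
    exact Finset.union_eq_right.mpr (Finset.singleton_subset_iff.mpr f.2.1)
  comp_id f := by
    apply Subtype.ext
    show f.1 ∪ ({_} : Finset ℕ) = f.1
    exact Finset.union_eq_left.mpr (Finset.singleton_subset_iff.mpr f.2.2.2.1)
  assoc f g h := Subtype.ext (Finset.union_assoc _ _ _)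

end DObj

/-- The projection functor π : 𝒪↑ → 𝒪, A ↦ max A on objects and U ↦ U on
morphisms. -/
def piF (n : ℕ) : UpObj n ⥤ DObj n where
  obj A := ⟨⟨A.top, Nat.lt_succ_of_le A.top_le⟩⟩
  map {A B} f := ⟨f.1, f.2.1, f.2.2.1, f.2.2.2.1, f.2.2.2.2.1⟩
  map_id A := rfl
  map_comp f g := rfl

theorem max'_range_succ (i : ℕ) (h : (Finset.range (i + 1)).Nonempty) :
    (Finset.range (i + 1)).max' h = i := by
  apply le_antisymm
  · apply Finset.max'_le
    intro y hy
    simp only [Finset.mem_range] at hy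
    omega
  · exact Finset.le_max' _ _ (by simp)

/-- The object part of s : 𝒪 → 𝒪↑, j ↦ {0,1,…,j}. -/
def sObj (n : ℕ) (i : DObj n) : UpObj n :=
  ⟨Finset.range ((i.val : ℕ) + 1), by simp, by
    intro x hx
    simp only [Finset.mem_range] at hx ⊢
    have := i.val.isLt
    omega⟩

theorem sObj_top (n : ℕ) (i : DObj n) : (sObj n i).top = (i.val : ℕ) :=
  max'_range_succ _ _

/-- The section functor s : 𝒪 → 𝒪↑, j ↦ {0,…,j} on objects and U ↦ U on
morphisms. -/
def sF (n : ℕ) : DObj n ⥤ UpObj n where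
  obj := sObj n
  map {i j} f :=
    ⟨f.1,
      (by rw [sObj_top]; exact f.2.1),
      (by rw [sObj_top]; exact f.2.2.1),
      (by rw [sObj_top]; exact f.2.2.2.1),
      (by rw [sObj_top]; exact f.2.2.2.2),
      (by
        intro x hx
        rcases Finset.mem_union.mp hx with h | h
        · have h' : x < (i.val : ℕ) + 1 := by
            simpa [sObj, Finset.mem_range] using h
          show x ∈ Finset.range ((j.val : ℕ) + 1)
          simp only [Finset.mem_range]
          have := DObj.DHom.le f
          omega
        · show x ∈ Finset.range ((j.val : ℕ) + 1)
          simp only [Finset.mem_range]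
          have := f.2.2.2.2 x h
          omega)⟩
  map_id i := by
    apply Subtype.ext
    show ({(i.val : ℕ)} : Finset ℕ) = ({(sObj n i).top} : Finset ℕ)
    rw [sObj_top]
  map_comp f g := rfl

theorem DObj.comp_val {n : ℕ} {i j k : DObj n} (f : i ⟶ j) (g : j ⟶ k) :
    (f ≫ g).1 = f.1 ∪ g.1 := rfl

theorem DObj.eqToHom_val {n : ℕ} {i j : DObj n} (h : i = j) :
    (eqToHom h).1 = ({(i.val : ℕ)} : Finset ℕ) := by subst h; rfl

theorem DObj.hom_eq_eqToHom {n : ℕ} {i j : DObj n} (f : i ⟶ j) (h : i = j)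
    (hU : f.1 = ({(i.val : ℕ)} : Finset ℕ)) : f = eqToHom h := by
  subst h; exact Subtype.ext hU

theorem piF_obj_val {n : ℕ} (A : UpObj n) :
    ((((piF n).obj A).val : Fin (n+1)) : ℕ) = A.top := rfl

/-- The canonical morphism A ⟶ s(π(A)) given by U = {max A}. -/
def wHom {n : ℕ} (A : UpObj n) : A ⟶ sObj n ((piF n).obj A) :=
  ⟨({A.top} : Finset ℕ), by simp, by simp,
    (by rw [sObj_top, piF_obj_val]; simp),
    (by rw [sObj_top, piF_obj_val]; simp),
    (by
      intro x hx
      show x ∈ Finset.range _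
      simp only [Finset.mem_range, piF_obj_val]
      rcases Finset.mem_union.mp hx with h | h
      · have := Finset.le_max' A.S x h
        exact Nat.lt_succ_of_le this
      · rw [Finset.mem_singleton.mp h]; omega)⟩

theorem wHom_top {n : ℕ} (A : UpObj n) :
    A.top = (sObj n ((piF n).obj A)).top := by
  rw [sObj_top, piF_obj_val]

theorem wHom_natural {n : ℕ} {A B : UpObj n} (f : A ⟶ B) :
    wHom A ≫ (sF n).map ((piF n).map f) = f ≫ wHom B := by
  apply Subtype.ext
  show ({A.top} : Finset ℕ) ∪ f.1 = f.1 ∪ ({B.top} : Finset ℕ)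
  rw [Finset.union_eq_right.mpr (Finset.singleton_subset_iff.mpr f.2.1),
    Finset.union_eq_left.mpr (Finset.singleton_subset_iff.mpr f.2.2.2.1)]

open CategoryTheory in
/-- (i) π and s are functors with s ⋙ π = 𝟭; (ii) a functor
H : 𝒪↑ ⥤ C factors through π iff it sends every morphism U : S → T with
max S = max T to an identity of C, and in that case H ∘ s is the unique
factorization. -/
theorem stmt_13 (n : ℕ) :
    (sF n ⋙ piF n = 𝟭 (DObj n)) ∧
    ∀ (C : Type*) [Category C] (H : UpObj n ⥤ C),
      ((∃ H' : DObj n ⥤ C, piF n ⋙ H' = H) ↔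
        ∀ (A B : UpObj n) (U : A ⟶ B), A.top = B.top →
          ∃ h : H.obj A = H.obj B, H.map U = eqToHom h) ∧
      ∀ H' : DObj n ⥤ C, piF n ⋙ H' = H → H' = sF n ⋙ H := by
  have part1 : sF n ⋙ piF n = 𝟭 (DObj n) := by
    apply CategoryTheory.Functor.ext
    · intro i j f
      apply Subtype.ext
      rw [DObj.comp_val, DObj.comp_val, DObj.eqToHom_val, DObj.eqToHom_val]
      simp only [Functor.comp_obj, Functor.comp_map, Functor.id_obj,
        Functor.id_map]
      have h1 : (((piF n).obj ((sF n).obj i)).val : ℕ) = (i.val : ℕ) :=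
        sObj_top n i
      simp only [h1]
      rw [Finset.union_eq_left.mpr (Finset.singleton_subset_iff.mpr f.2.2.2.1),
        Finset.union_eq_right.mpr (Finset.singleton_subset_iff.mpr f.2.1)]
      rfl
    · intro i
      show (⟨⟨(sObj n i).top, _⟩⟩ : DObj n) = i
      obtain ⟨⟨v, hv⟩⟩ := i
      congr 1
      apply Fin.ext
      exact sObj_top n ⟨⟨v, hv⟩⟩
  refine ⟨part1, ?_⟩
  intro C _ H
  constructor
  · constructor
    · rintro ⟨H', rfl⟩ A B U htop
      have hobj : (piF n).obj A = (piF n).obj B := by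
        show (⟨⟨A.top, _⟩⟩ : DObj n) = ⟨⟨B.top, _⟩⟩
        congr 1
        exact Fin.ext htop
      have hU : ((piF n).map U).1 = ({(((piF n).obj A).val : ℕ)} : Finset ℕ) := by
        apply Finset.ext
        intro x
        simp only [Finset.mem_singleton]
        constructor
        · intro hx
          have h1 := U.2.2.1 x hx
          have h2 := U.2.2.2.2.1 x hx
          show x = A.top
          omega
        · intro hx
          show x ∈ U.1
          rw [hx]; exact U.2.1
      have hmap : (piF n).map U = eqToHom hobj :=
        DObj.hom_eq_eqToHom _ hobj hU
      refine ⟨congrArg H'.obj hobj, ?_⟩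
      show H'.map ((piF n).map U) = _
      rw [hmap, eqToHom_map]
    · intro hkill
      refine ⟨sF n ⋙ H, ?_⟩
      apply CategoryTheory.Functor.ext
      · intro A B f
        obtain ⟨hA, hwA⟩ := hkill A _ (wHom A) (wHom_top A)
        obtain ⟨hB, hwB⟩ := hkill B _ (wHom B) (wHom_top B)
        have hnat := congrArg H.map (wHom_natural f)
        erw [H.map_comp, H.map_comp, hwA, hwB] at hnat
        show H.map ((sF n).map ((piF n).map f)) = _
        have hA' : H.obj A = H.obj ((sF n).obj ((piF n).obj A)) := hA
        have hB' : H.obj B = H.obj ((sF n).obj ((piF n).obj B)) := hB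
        have hnat' : eqToHom hA' ≫ H.map ((sF n).map ((piF n).map f)) =
            H.map f ≫ eqToHom hB' := hnat
        have e : H.map ((sF n).map ((piF n).map f)) =
            eqToHom hA'.symm ≫ H.map f ≫ eqToHom hB' := by
          rw [← hnat']; simp
        exact e
      · intro A
        obtain ⟨hA, _⟩ := hkill A _ (wHom A) (wHom_top A)
        exact hA.symm
  · intro H' hH'
    calc H' = 𝟭 (DObj n) ⋙ H' := (Functor.id_comp H').symm
      _ = (sF n ⋙ piF n) ⋙ H' := by rw [part1]
      _ = sF n ⋙ (piF n ⋙ H') := Functor.assoc _ _ _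
      _ = sF n ⋙ H := by rw [hH']
end
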